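/- (Primal optimality gap, grid-spacing bound.) Let X_1,…,X_N ∈ ℝ and grid points μ̂_1 < … < μ̂_M satisfy μ̂_1 ≤ min_i X_i ≤ max_i X_i ≤ μ̂_M, and let φ(t) = (1/√(2π)) exp(-t²/2). Let p̂ be the optimal value of the discretized primal problem min_{w∈Δ_M} -∑_{i=1}^N log(∑_{j=1}^M w_j φ(X_i - μ̂_j)), let p* = inf_Q -∑_{i=1}^N log ∫_ℝ φ(X_i - μ) dQ(μ) over Borel probability measures Q on ℝ, and let ν̂ be an optimal solution of the discretized dual problem. Let ΔG = max_{1 ≤ i ≤ M-1} (μ̂_{i+1} - μ̂_i) be the largest spacing of the grid. Then p* ≤ p̂ ≤ p* + N log( 1 + (ΔG/√(8πe)) · (1/N) ∑_{i=1}^N ν̂_i ). -/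

import Mathlib

open Finset MeasureTheory

noncomputable def gphi (t : ℝ) : ℝ := Real.exp (-(t ^ 2) / 2) / Real.sqrt (2 * Real.pi)

lemma sqrt2pi_pos : (0:ℝ) < Real.sqrt (2 * Real.pi) := by positivity

lemma gphi_pos (t : ℝ) : 0 < gphi t := by unfold gphi; positivity

lemma gphi_le_one (t : ℝ) : gphi t ≤ 1 := by
  unfold gphi
  rw [div_le_one sqrt2pi_pos]
  calc Real.exp (-(t ^ 2) / 2) ≤ Real.exp 0 := by
        apply Real.exp_le_exp.2; nlinarith [sq_nonneg t]
    _ = 1 := Real.exp_zero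
    _ ≤ Real.sqrt (2 * Real.pi) := by
        rw [show (1:ℝ) = Real.sqrt 1 by simp]
        exact Real.sqrt_le_sqrt (by nlinarith [Real.pi_gt_three])

lemma gphi_cont : Continuous gphi := by
  unfold gphi
  exact (Real.continuous_exp.comp (by fun_prop)).div_const _

lemma gphi_anti {u v : ℝ} (h : |u| ≤ |v|) : gphi v ≤ gphi u := by
  unfold gphi
  have : Real.exp (-(v ^ 2) / 2) ≤ Real.exp (-(u ^ 2) / 2) := by
    apply Real.exp_le_exp.2
    have h2 : u ^ 2 ≤ v ^ 2 := by
      rw [← sq_abs u, ← sq_abs v]; exact pow_le_pow_left₀ (abs_nonneg u) h 2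
    linarith
  gcongr

lemma gphi_hasDeriv (t : ℝ) : HasDerivAt gphi (-t * gphi t) t := by
  unfold gphi
  have h1 : HasDerivAt (fun t : ℝ => -(t ^ 2) / 2) (-t) t := by
    have := ((hasDerivAt_pow 2 t).neg).div_const 2
    refine this.congr_deriv ?_
    norm_num; ring
  have h2 := (h1.exp).div_const (Real.sqrt (2 * Real.pi))
  refine h2.congr_deriv ?_
  ring

lemma gphi_deriv_bound (t : ℝ) :
    ‖-t * gphi t‖ ≤ (Real.sqrt (2 * Real.pi * Real.exp 1))⁻¹ := by
  have hkey : |t| * Real.exp (-(t ^ 2) / 2) ≤ Real.exp (-(1:ℝ)/2) := by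
    have h1 : |t| ≤ Real.exp ((t ^ 2 - 1) / 2) := by
      have := Real.add_one_le_exp ((t ^ 2 - 1) / 2)
      nlinarith [sq_nonneg (|t| - 1), sq_abs t]
    calc |t| * Real.exp (-(t ^ 2) / 2)
        ≤ Real.exp ((t ^ 2 - 1) / 2) * Real.exp (-(t ^ 2) / 2) := by gcongr
      _ = Real.exp (-(1:ℝ)/2) := by rw [← Real.exp_add]; ring_nf
  have hsq : Real.sqrt (2 * Real.pi * Real.exp 1)
      = Real.sqrt (2 * Real.pi) * Real.exp ((1:ℝ)/2) := by
    rw [Real.sqrt_mul (by positivity)]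
    congr 1
    rw [show Real.exp 1 = Real.exp ((1:ℝ)/2) * Real.exp ((1:ℝ)/2) by
      rw [← Real.exp_add]; norm_num]
    exact Real.sqrt_mul_self (Real.exp_nonneg _)
  rw [norm_mul, norm_neg, Real.norm_eq_abs, Real.norm_eq_abs, hsq]
  unfold gphi
  rw [abs_div, abs_of_nonneg (Real.exp_nonneg _), abs_of_nonneg (Real.sqrt_nonneg _)]
  rw [mul_inv, ← Real.exp_neg]
  rw [mul_div_assoc', mul_comm ((Real.sqrt (2*Real.pi))⁻¹) _, ← div_eq_mul_inv]
  rw [show -(1:ℝ)/2 = -(1/2 : ℝ) by norm_num] at hkey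
  gcongr

lemma gphi_lip (a b : ℝ) :
    gphi a ≤ gphi b + (Real.sqrt (2 * Real.pi * Real.exp 1))⁻¹ * |a - b| := by
  have h := Convex.norm_image_sub_le_of_norm_deriv_le (𝕜 := ℝ) (f := gphi)
    (s := Set.univ) (fun x _ => (gphi_hasDeriv x).differentiableAt)
    (fun x _ => by rw [(gphi_hasDeriv x).deriv]; exact gphi_deriv_bound x)
    convex_univ (Set.mem_univ b) (Set.mem_univ a)
  rw [Real.norm_eq_abs, Real.norm_eq_abs] at h
  have := abs_le.1 h
  linarith [this.1]

lemma gphi_integrable (x : ℝ) (Q : Measure ℝ) [IsFiniteMeasure Q] :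
    Integrable (fun t => gphi (x - t)) Q := by
  apply Integrable.mono' (integrable_const (1:ℝ))
  · exact (gphi_cont.comp (continuous_const.sub continuous_id)).aestronglyMeasurable
  · filter_upwards with t
    rw [Real.norm_eq_abs, abs_of_nonneg (gphi_pos _).le]
    exact gphi_le_one _

lemma near_grid {M : ℕ} (hM : 0 < M) (μ : Fin M → ℝ) {DG : ℝ}
    (hDG0 : 0 ≤ DG)
    (hub : ∀ (i : ℕ) (h : i + 1 < M), μ ⟨i + 1, h⟩ - μ ⟨i, Nat.lt_of_succ_lt h⟩ ≤ DG)
    {t : ℝ} (h1 : μ ⟨0, hM⟩ ≤ t) (h2 : t ≤ μ ⟨M - 1, by omega⟩) :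
    ∃ j : Fin M, |t - μ j| ≤ DG / 2 := by
  classical
  set s : Finset (Fin M) := Finset.univ.filter (fun j => μ j ≤ t) with hs
  have hne : s.Nonempty := ⟨⟨0, hM⟩, by simp [hs, h1]⟩
  set k := s.max' hne with hk
  have hkt : μ k ≤ t := by
    have := s.max'_mem hne
    simp only [hs, Finset.mem_filter] at this
    exact this.2
  by_cases hc : (k : ℕ) + 1 < M
  · set k' : Fin M := ⟨(k : ℕ) + 1, hc⟩ with hk'
    have htk' : t < μ k' := by
      by_contra hcon
      push_neg at hcon
      have hmem : k' ∈ s := by simp [hs]; exact hcon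
      have hle := s.le_max' k' hmem
      rw [← hk] at hle
      rw [Fin.le_def] at hle
      simp [hk'] at hle
    have hgap : μ k' - μ k ≤ DG := by
      have := hub (k : ℕ) hc
      convert this using 3
    rcases le_or_gt t ((μ k + μ k') / 2) with hle | hlt
    · exact ⟨k, by rw [abs_of_nonneg (by linarith)]; linarith⟩
    · exact ⟨k', by rw [abs_of_nonpos (by linarith)]; linarith⟩
  · have hkM : (k : ℕ) = M - 1 := by have := k.isLt; omega
    have hkk : k = ⟨M - 1, by omega⟩ := Fin.ext hkM
    refine ⟨k, ?_⟩
    rw [hkk] at hkt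
    have : t = μ (⟨M - 1, by omega⟩ : Fin M) := le_antisymm h2 hkt
    rw [hkk, ← this, sub_self, abs_zero]
    linarith

set_option maxHeartbeats 1000000

/-- Primal optimality gap, grid-spacing bound: with `ΔG` the largest spacing of the grid and
`ν̂` the optimal discretized dual solution (value `p̂`),
`p* ≤ p̂ ≤ p* + N log(1 + (ΔG/√(8πe))·(1/N)∑ ν̂_i)`. -/
theorem stmt18 (M N : ℕ) (hM : 0 < M) (hN : 0 < N)
    (X : Fin N → ℝ) (μ : Fin M → ℝ) (hμ : StrictMono μ)
    (hgrid : ∀ i : Fin N, μ ⟨0, hM⟩ ≤ X i ∧ X i ≤ μ ⟨M - 1, by omega⟩)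
    (φ : ℝ → ℝ) (hφ : φ = fun t => Real.exp (-(t ^ 2) / 2) / Real.sqrt (2 * Real.pi))
    (P : (Fin M → ℝ) → ℝ)
    (hP : P = fun w => -∑ i, Real.log (∑ j, w j * φ (X i - μ j)))
    (phat : ℝ)
    (hphat : phat = sInf (P '' {w : Fin M → ℝ | ∑ j, w j = 1 ∧ ∀ j, 0 ≤ w j}))
    (pstar : ℝ)
    (hpstar : pstar = sInf {r : ℝ | ∃ Q : Measure ℝ, IsProbabilityMeasure Q ∧
        r = -∑ i, Real.log (∫ t, φ (X i - t) ∂Q)})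
    (ν : Fin N → ℝ) (hνpos : ∀ i, 0 < ν i)
    (hνfeas : ∀ j, ∑ i, ν i * φ (X i - μ j) ≤ (N : ℝ))
    (hνopt : ∀ ν' : Fin N → ℝ, (∀ i, 0 < ν' i) →
      (∀ j, ∑ i, ν' i * φ (X i - μ j) ≤ (N : ℝ)) →
      ∑ i, Real.log (ν' i) ≤ ∑ i, Real.log (ν i))
    (hνval : ∑ i, Real.log (ν i) = phat)
    (DG : ℝ)
    (hDG : IsGreatest {d : ℝ | ∃ i : ℕ, ∃ h : i + 1 < M,
        d = μ ⟨i + 1, h⟩ - μ ⟨i, Nat.lt_of_succ_lt h⟩} DG) :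
    pstar ≤ phat ∧
    phat ≤ pstar + (N : ℝ) * Real.log
        (1 + DG / Real.sqrt (8 * Real.pi * Real.exp 1) * ((1 / (N : ℝ)) * ∑ i, ν i)) := by
  have hφg : φ = gphi := hφ
  subst hφg
  subst hP hphat hpstar
  -- basic positivity facts
  have hDGpos : 0 < DG := by
    obtain ⟨i, hi, hd⟩ := hDG.1
    rw [hd]
    have : (⟨i, Nat.lt_of_succ_lt hi⟩ : Fin M) < ⟨i + 1, hi⟩ := Fin.mk_lt_mk.2 (Nat.lt_succ_self i)
    linarith [hμ this]
  set L : ℝ := (Real.sqrt (2 * Real.pi * Real.exp 1))⁻¹ with hL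
  have hLpos : 0 < L := by rw [hL]; positivity
  set ε : ℝ := DG / Real.sqrt (8 * Real.pi * Real.exp 1) with hε
  have hεL : ε = L * (DG / 2) := by
    rw [hε, hL]
    have h8 : Real.sqrt (8 * Real.pi * Real.exp 1)
        = 2 * Real.sqrt (2 * Real.pi * Real.exp 1) := by
      rw [show (8:ℝ) * Real.pi * Real.exp 1 = 4 * (2 * Real.pi * Real.exp 1) by ring,
        Real.sqrt_mul (by norm_num : (0:ℝ) ≤ 4),
        show Real.sqrt 4 = 2 by
          rw [show (4:ℝ) = 2 ^ 2 by norm_num]; exact Real.sqrt_sq (by norm_num)]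
    rw [h8, inv_mul_eq_div, div_div]
  have hεpos : 0 < ε := by rw [hε]; positivity
  set S : ℝ := ∑ i, ν i with hS
  haveI : Nonempty (Fin N) := ⟨⟨0, hN⟩⟩
  have hSpos : 0 < S := Finset.sum_pos (fun i _ => hνpos i) univ_nonempty
  set c : ℝ := 1 + ε * ((1 / (N : ℝ)) * S) with hc
  have hNpos : (0:ℝ) < N := Nat.cast_pos.2 hN
  have hc1 : 1 < c := by
    rw [hc]
    have : 0 < ε * ((1 / (N : ℝ)) * S) := by positivity
    linarith
  have hcpos : 0 < c := by linarith
  -- lower bound for the pstar set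
  set pset : Set ℝ := {r : ℝ | ∃ Q : Measure ℝ, IsProbabilityMeasure Q ∧
        r = -∑ i, Real.log (∫ t, gphi (X i - t) ∂Q)} with hpset
  have hbdd : BddBelow pset := by
    refine ⟨0, fun r hr => ?_⟩
    obtain ⟨Q, hQ, rfl⟩ := hr
    haveI := hQ
    rw [neg_nonneg]
    apply Finset.sum_nonpos
    intro i _
    apply Real.log_nonpos
    · exact integral_nonneg (fun t => (gphi_pos _).le)
    · calc ∫ t, gphi (X i - t) ∂Q ≤ ∫ _t, (1:ℝ) ∂Q := by
            apply integral_mono (gphi_integrable _ _) (integrable_const _)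
            intro t
            exact gphi_le_one _
        _ = 1 := by simp
  have hne : pset.Nonempty := by
    refine ⟨_, Measure.dirac (μ ⟨0, hM⟩), inferInstance, rfl⟩
  -- Part 1 : pstar ≤ phat
  have h1 : sInf pset ≤ sInf ((fun w => -∑ i, Real.log (∑ j, w j * gphi (X i - μ j))) ''
      {w : Fin M → ℝ | ∑ j, w j = 1 ∧ ∀ j, 0 ≤ w j}) := by
    apply le_csInf
    · have hw : (fun j : Fin M => if j = (⟨0, hM⟩ : Fin M) then (1:ℝ) else 0) ∈
          {w : Fin M → ℝ | ∑ j, w j = 1 ∧ ∀ j, 0 ≤ w j} := by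
        constructor
        · simp
        · intro j; dsimp only; split <;> norm_num
      exact ⟨_, Set.mem_image_of_mem _ hw⟩
    · rintro b ⟨w, ⟨hw1, hw0⟩, rfl⟩
      apply csInf_le hbdd
      refine ⟨∑ j : Fin M, (ENNReal.ofReal (w j)) • Measure.dirac (μ j), ?_, ?_⟩
      · constructor
        rw [Measure.finset_sum_apply]
        simp only [Measure.smul_apply, measure_univ, smul_eq_mul, mul_one]
        rw [← ENNReal.ofReal_sum_of_nonneg (fun j _ => hw0 j), hw1, ENNReal.ofReal_one]
      · dsimp only
        congr 1
        apply Finset.sum_congr rfl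
        intro i _
        congr 1
        haveI : ∀ j : Fin M, IsFiniteMeasure ((ENNReal.ofReal (w j)) • Measure.dirac (μ j)) :=
          fun j => ⟨by
            rw [Measure.smul_apply, measure_univ, smul_eq_mul, mul_one]
            exact ENNReal.ofReal_lt_top⟩
        rw [integral_finset_sum_measure (fun j _ => gphi_integrable _ _)]
        apply Finset.sum_congr rfl
        intro j _
        rw [integral_smul_measure, integral_dirac, smul_eq_mul,
          ENNReal.toReal_ofReal (hw0 j)]
  -- Claim A : uniform dual feasibility violation bound
  have hA : ∀ t : ℝ, ∑ i, ν i * gphi (X i - t) ≤ (N : ℝ) * c := by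
    intro t
    have hNc : (N : ℝ) + ε * S = (N : ℝ) * c := by
      rw [hc]; field_simp
    have hbase : ∀ (j : Fin M), ∑ i, ν i * gphi (X i - μ j) ≤ (N : ℝ) := hνfeas
    by_cases h0 : t < μ ⟨0, hM⟩
    · calc ∑ i, ν i * gphi (X i - t) ≤ ∑ i, ν i * gphi (X i - μ ⟨0, hM⟩) := by
            apply Finset.sum_le_sum
            intro i _
            have hXi := (hgrid i).1
            apply mul_le_mul_of_nonneg_left _ (hνpos i).le
            apply gphi_anti
            rw [abs_of_nonneg (by linarith), abs_of_nonneg (by linarith)]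
            linarith
        _ ≤ (N : ℝ) := hbase _
        _ ≤ (N : ℝ) * c := by nlinarith
    by_cases h1' : μ ⟨M - 1, Nat.sub_lt hM Nat.one_pos⟩ < t
    · calc ∑ i, ν i * gphi (X i - t) ≤ ∑ i, ν i * gphi (X i - μ ⟨M - 1, Nat.sub_lt hM Nat.one_pos⟩) := by
            apply Finset.sum_le_sum
            intro i _
            have hXi := (hgrid i).2
            apply mul_le_mul_of_nonneg_left _ (hνpos i).le
            apply gphi_anti
            rw [abs_of_nonpos (by linarith), abs_of_nonpos (by linarith)]
            linarith
        _ ≤ (N : ℝ) := hbase _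
        _ ≤ (N : ℝ) * c := by nlinarith
    push_neg at h0 h1'
    obtain ⟨j, hj⟩ := near_grid hM μ hDGpos.le
      (fun i h => hDG.2 ⟨i, h, rfl⟩) h0 h1'
    calc ∑ i, ν i * gphi (X i - t)
        ≤ ∑ i, ν i * (gphi (X i - μ j) + ε) := by
          apply Finset.sum_le_sum
          intro i _
          apply mul_le_mul_of_nonneg_left _ (hνpos i).le
          calc gphi (X i - t)
              ≤ gphi (X i - μ j) + L * |(X i - t) - (X i - μ j)| := gphi_lip _ _
            _ ≤ gphi (X i - μ j) + ε := by
                rw [hεL]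
                have : |(X i - t) - (X i - μ j)| = |t - μ j| := by
                  rw [show (X i - t) - (X i - μ j) = -(t - μ j) by ring, abs_neg]
                rw [this]
                have := mul_le_mul_of_nonneg_left hj hLpos.le
                linarith
      _ = (∑ i, ν i * gphi (X i - μ j)) + ε * S := by
          rw [hS, Finset.mul_sum]
          rw [← Finset.sum_add_distrib]
          apply Finset.sum_congr rfl
          intro i _
          ring
      _ ≤ (N : ℝ) + ε * S := by linarith [hbase j]
      _ = (N : ℝ) * c := hNc
  -- Claim B : phat - N log c is a lower bound for pset
  have hB : ∀ r ∈ pset, (∑ i, Real.log (ν i)) - (N : ℝ) * Real.log c ≤ r := by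
    rintro r ⟨Q, hQ, rfl⟩
    haveI := hQ
    set f : Fin N → ℝ := fun i => ∫ t, gphi (X i - t) ∂Q with hf
    have hfpos : ∀ i, 0 < f i := by
      intro i
      rw [hf]
      rw [integral_pos_iff_support_of_nonneg (fun t => (gphi_pos _).le)
        (gphi_integrable _ _)]
      have hsupp : (Function.support fun t => gphi (X i - t)) = Set.univ := by
        ext t; simp [Function.mem_support, (gphi_pos (X i - t)).ne']
      rw [hsupp, measure_univ]
      norm_num
    have hsum : ∑ i, ν i * f i ≤ (N : ℝ) * c := by
      have heq : ∑ i, ν i * f i = ∫ t, (∑ i, ν i * gphi (X i - t)) ∂Q := by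
        rw [integral_finset_sum _ (fun i _ => ((gphi_integrable (X i) Q).const_mul (ν i)))]
        apply Finset.sum_congr rfl
        intro i _
        rw [hf, integral_const_mul]
      rw [heq]
      calc ∫ t, (∑ i, ν i * gphi (X i - t)) ∂Q ≤ ∫ _t, (N : ℝ) * c ∂Q := by
            apply integral_mono
              (integrable_finset_sum _ (fun i _ => ((gphi_integrable (X i) Q).const_mul (ν i))))
              (integrable_const _)
            intro t
            exact hA t
        _ = (N : ℝ) * c := by simp
    have hkey : ∑ i, (Real.log (ν i) + Real.log (f i) - Real.log c) ≤ 0 := by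
      calc ∑ i, (Real.log (ν i) + Real.log (f i) - Real.log c)
          ≤ ∑ i, (ν i * f i / c - 1) := by
            apply Finset.sum_le_sum
            intro i _
            have hpos : 0 < ν i * f i / c :=
              div_pos (mul_pos (hνpos i) (hfpos i)) hcpos
            have h := Real.log_le_sub_one_of_pos hpos
            rw [Real.log_div (mul_pos (hνpos i) (hfpos i)).ne' hcpos.ne', Real.log_mul (hνpos i).ne'
              (hfpos i).ne'] at h
            linarith
        _ = (∑ i, ν i * f i) / c - N := by
            rw [Finset.sum_sub_distrib, Finset.sum_const, Finset.card_univ,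
              Fintype.card_fin, ← Finset.sum_div]
            simp [nsmul_eq_mul]
        _ ≤ 0 := by
            rw [sub_nonpos, div_le_iff₀ hcpos]
            exact hsum
    rw [Finset.sum_sub_distrib, Finset.sum_add_distrib, Finset.sum_const,
      Finset.card_univ, Fintype.card_fin, nsmul_eq_mul] at hkey
    linarith
  have h2 : (∑ i, Real.log (ν i)) - (N : ℝ) * Real.log c ≤ sInf pset := le_csInf hne hB
  constructor
  · exact h1
  · rw [← hνval]
    have : Real.log c = Real.log (1 + DG / Real.sqrt (8 * Real.pi * Real.exp 1)
        * ((1 / (N : ℝ)) * ∑ i, ν i)) := by rw [hc, hε, hS]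
    rw [← this]
    linarith
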